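/- arXiv:2312.09363 — 6 statements merged into one kernel-verified Lean document; each statement's English description precedes it below -/
import Mathlib

section
/- Let (X,d) be a proper metric space with a fixed basepoint x₀. Then the collection of all closed subsets of X is totally bounded with respect to ρ: for every ε > 0 there exists a finite family 𝒜 of subsets of X such that for every closed subset D ⊆ X there is A ∈ 𝒜 with ρ(D,A) ≤ ε. -/
/-! A closed set `D` is `ρ`-approximated within `ε` by the points of a finite `ε`-net `N` of
the compact ball `B̄_{1/ε}(x₀)` that lie within `ε` of `D`; there are finitely many such
subsets of `N`. -/

open Metric Set Filter

/-- The metric ρ on subsets of `X` (with basepoint `x₀`), following Smilansky–Solomon. -/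
noncomputable def rho {X : Type*} [MetricSpace X] (x₀ : X) (D₁ D₂ : Set X) : ℝ :=
  sInf ({ε : ℝ | 0 < ε ∧ D₁ ∩ ball x₀ (1 / ε) ⊆ thickening ε D₂ ∧
      D₂ ∩ ball x₀ (1 / ε) ⊆ thickening ε D₁} ∪ {1})

theorem rho_le_of_subset_thickening {X : Type*} [MetricSpace X] {x₀ : X} {D₁ D₂ : Set X}
    {ε : ℝ} (hε : 0 < ε) (h₁ : D₁ ∩ ball x₀ (1 / ε) ⊆ thickening ε D₂)
    (h₂ : D₂ ∩ ball x₀ (1 / ε) ⊆ thickening ε D₁) :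
    rho x₀ D₁ D₂ ≤ ε :=
  csInf_le ⟨0, by rintro δ (⟨hδ, -⟩ | rfl) <;> [exact hδ.le; exact zero_le_one]⟩
    (Or.inl ⟨hε, h₁, h₂⟩)

theorem inter_subset_thickening_inter_thickening {X : Type*} [PseudoMetricSpace X]
    {S N D : Set X} {ε : ℝ} (hN : S ⊆ ⋃ y ∈ N, ball y ε) :
    D ∩ S ⊆ thickening ε (N ∩ thickening ε D) := by
  rintro x ⟨hxD, hxS⟩
  obtain ⟨y, hyN, hxy⟩ := mem_iUnion₂.mp (hN hxS)
  have hyD : y ∈ thickening ε D := mem_thickening_iff.mpr ⟨x, hxD, by rwa [dist_comm]⟩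
  exact mem_thickening_iff.mpr ⟨y, ⟨hyN, hyD⟩, hxy⟩

theorem rho_inter_thickening_le {X : Type*} [MetricSpace X] {x₀ : X} {N D : Set X} {ε : ℝ}
    (hε : 0 < ε) (hN : ball x₀ (1 / ε) ⊆ ⋃ y ∈ N, ball y ε) :
    rho x₀ D (N ∩ thickening ε D) ≤ ε :=
  rho_le_of_subset_thickening hε (inter_subset_thickening_inter_thickening hN)
    (inter_subset_left.trans inter_subset_right)

/-- The collection of all closed subsets of a proper metric space is totally bounded
with respect to `ρ`. -/
theorem closedSubsets_totallyBounded_rho {X : Type*} [MetricSpace X] [ProperSpace X]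
    (x₀ : X) :
    ∀ ε > (0 : ℝ), ∃ 𝒜 : Finset (Set X), ∀ D : Set X, IsClosed D →
      ∃ A ∈ 𝒜, rho x₀ D A ≤ ε := by
  intro ε hε
  obtain ⟨N, hNfin, hN⟩ :=
    totallyBounded_iff.mp (isCompact_closedBall x₀ (1 / ε)).totallyBounded ε hε
  refine ⟨hNfin.finite_subsets.toFinset, fun D _ => ⟨N ∩ thickening ε D, ?_, ?_⟩⟩
  · simp
  · exact rho_inter_thickening_le hε (ball_subset_closedBall.trans hN)
end

section
/- Let (X,d) be a metric space with a fixed basepoint x₀, let s > 0, and let (D_n) be a sequence of s-discrete subsets of X. If E ⊆ X is a subset with ρ(D_n, E) → 0 as n → ∞, then E is s-discrete, i.e. d(x,y) ≥ s for all distinct x,y ∈ E. -/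
open Metric Set Filter

/-- `D` is `s`-discrete: distinct points of `D` are at distance at least `s`. -/
def IsDiscreteWith {X : Type*} [MetricSpace X] (s : ℝ) (D : Set X) : Prop :=
  ∀ x ∈ D, ∀ y ∈ D, x ≠ y → s ≤ dist x y

/-! Fix distinct `x, y ∈ E`. For small `ε > 0` both lie in `B_{1/ε}(x₀)`, and choosing `n` with
`ρ(Dₙ, E) < ε` puts them within `ε` of points of `Dₙ`, which are distinct once `2ε ≤ d(x, y)`.
Hence `s ≤ d(x, y) + 2ε` for all small `ε`, and letting `ε → 0` gives `s ≤ d(x, y)`. -/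

open Topology

section Rho

variable {X : Type*} [MetricSpace X] {x₀ : X} {D₁ D₂ : Set X} {ε : ℝ}

/-- The inclusions defining `rho` are monotone in `ε`; `ε ≤ 1` excludes the case where only the
padding value `1` of the infimum lies below `ε`. -/
theorem subset_thickening_of_rho_lt (h : rho x₀ D₁ D₂ < ε) (hε : ε ≤ 1) :
    D₁ ∩ ball x₀ (1 / ε) ⊆ thickening ε D₂ ∧ D₂ ∩ ball x₀ (1 / ε) ⊆ thickening ε D₁ := by
  have hbdd : BddBelow ({ε : ℝ | 0 < ε ∧ D₁ ∩ ball x₀ (1 / ε) ⊆ thickening ε D₂ ∧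
      D₂ ∩ ball x₀ (1 / ε) ⊆ thickening ε D₁} ∪ {1}) := by
    refine ⟨0, ?_⟩
    rintro a (ha | rfl)
    exacts [ha.1.le, zero_le_one]
  obtain ⟨a, ha, haε⟩ := (csInf_lt_iff hbdd ⟨1, Or.inr rfl⟩).1 h
  rcases ha with ⟨ha, h₁₂, h₂₁⟩ | rfl
  · have hball : ball x₀ (1 / ε) ⊆ ball x₀ (1 / a) :=
      ball_subset_ball (one_div_le_one_div_of_le ha haε.le)
    have hthick (D : Set X) : thickening a D ⊆ thickening ε D := thickening_mono haε.le D
    exact ⟨fun z hz => hthick _ (h₁₂ ⟨hz.1, hball hz.2⟩),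
      fun z hz => hthick _ (h₂₁ ⟨hz.1, hball hz.2⟩)⟩
  · exact absurd hε (not_le.2 haε)

theorem exists_subset_thickening_of_tendsto_rho {D : ℕ → Set X} {E : Set X}
    (hconv : Tendsto (fun n => rho x₀ (D n) E) atTop (𝓝 0)) (hε : 0 < ε) (hε₁ : ε ≤ 1) :
    ∃ n, E ∩ ball x₀ (1 / ε) ⊆ thickening ε (D n) := by
  obtain ⟨n, hn⟩ := (hconv.eventually (gt_mem_nhds hε)).exists
  exact ⟨n, (subset_thickening_of_rho_lt hn hε₁).2⟩

end Rho

/-- Points at least `2ε` apart cannot be `ε`-close to the same point of `D`. -/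
theorem IsDiscreteWith.le_dist_add_of_mem_thickening {X : Type*} [MetricSpace X] {s ε : ℝ}
    {D : Set X} {x y : X} (hD : IsDiscreteWith s D) (hx : x ∈ thickening ε D)
    (hy : y ∈ thickening ε D) (hxy : 2 * ε ≤ dist x y) : s ≤ dist x y + 2 * ε := by
  obtain ⟨p, hp, hxp⟩ := mem_thickening_iff.1 hx
  obtain ⟨q, hq, hyq⟩ := mem_thickening_iff.1 hy
  have hpq : p ≠ q := by
    rintro rfl
    have := dist_triangle_right x y p
    linarith
  calc s ≤ dist p q := hD p hp q hq hpq
    _ ≤ dist p x + dist x y + dist y q := dist_triangle4 p x y q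
    _ ≤ dist x y + 2 * ε := by rw [dist_comm p x]; linarith

theorem limit_isDiscreteWith_general {X : Type*} [MetricSpace X] (x₀ : X)
    (s : ℝ) (D : ℕ → Set X)
    (hD : ∀ n, IsDiscreteWith s (D n)) (E : Set X)
    (hconv : Tendsto (fun n => rho x₀ (D n) E) atTop (nhds 0)) :
    IsDiscreteWith s E := by
  intro x hx y hy hxy
  have hxy_pos : 0 < dist x y := dist_pos.2 hxy
  have hsmall : ∀ᶠ ε in 𝓝[>] (0 : ℝ), s ≤ dist x y + 2 * ε := by
    filter_upwards [self_mem_nhdsWithin, Ioo_mem_nhdsGT one_pos,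
      Ioo_mem_nhdsGT (half_pos hxy_pos),
      tendsto_inv_nhdsGT_zero.eventually (eventually_gt_atTop (max (dist x x₀) (dist y x₀)))]
      with ε (hε : 0 < ε) hε₁ hε₂ hεinv
    obtain ⟨n, hn⟩ := exists_subset_thickening_of_tendsto_rho hconv hε hε₁.2.le
    have hball (z : X) (hz : dist z x₀ ≤ max (dist x x₀) (dist y x₀)) :
        z ∈ ball x₀ (1 / ε) := by
      rw [mem_ball, one_div]
      exact hz.trans_lt hεinv
    exact (hD n).le_dist_add_of_mem_thickening (hn ⟨hx, hball x (le_max_left _ _)⟩)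
      (hn ⟨hy, hball y (le_max_right _ _)⟩) (by linarith [hε₂.2])
  have hlim : Tendsto (fun ε => dist x y + 2 * ε) (𝓝[>] (0 : ℝ)) (𝓝 (dist x y)) := by
    simpa using (tendsto_const_nhds.add (tendsto_nhdsWithin_of_tendsto_nhds
      ((continuous_const_mul (2 : ℝ)).tendsto 0)))
  exact ge_of_tendsto hlim hsmall

/-- A `ρ`-limit of `s`-discrete sets is `s`-discrete. -/
theorem limit_isDiscreteWith {X : Type*} [MetricSpace X] (x₀ : X)
    (s : ℝ) (hs : 0 < s) (D : ℕ → Set X)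
    (hD : ∀ n, IsDiscreteWith s (D n)) (E : Set X)
    (hconv : Tendsto (fun n => rho x₀ (D n) E) atTop (nhds 0)) :
    IsDiscreteWith s E :=
  limit_isDiscreteWith_general x₀ s D hD E hconv
end

section
/- Let (X,d,μ) be a metric measure space of bounded geometry and let D ⊆ X be an (r,R)-Delone set. Then there exists a family {φ_u}_{u∈D} of functions φ_u : X → [0,1] such that: (p1) φ_u(x) = 0 whenever d(x,u) ≥ 2R, for every u ∈ D; (p2) φ_u(x) = 1 for every x with d(x,u) < r/6; (p3) Σ_{u∈D} φ_u(x) = 1 for every x ∈ X; and (p4) there exists L > 0 such that every φ_u is L-Lipschitz. -/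
open Metric Set MeasureTheory ENNReal

/-- `D` is `R`-dense: every point of `X` is within distance `R` of `D`. -/
def IsDenseWith {X : Type*} [MetricSpace X] (R : ℝ) (D : Set X) : Prop :=
  ∀ x : X, ∃ y ∈ D, dist x y ≤ R

/-- A metric measure space of bounded geometry. -/
def BoundedGeometry {X : Type*} [MetricSpace X] [MeasurableSpace X] (μ : Measure X) : Prop :=
  ∀ R > (0 : ℝ), ∃ c C : ℝ≥0∞, 0 < c ∧ C < ⊤ ∧
    ∀ x : X, c ≤ μ (ball x R) ∧ μ (ball x R) ≤ C

/-! For `u ∈ D` take a bump `ψ_u` that vanishes outside `ball u (2R)` and within `r/6` of the other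
points of `D`, and equals `1` at points within `R` of `u` and at least `r/4` from the other points;
by density and `r`-discreteness every `x` is such a point for some `u`. Bounded geometry caps the
number of disjoint `r/2`-balls inside a `(3R + r/2)`-ball, hence the number `N` of bumps that are
nonzero somewhere on a given `R`-ball. So `S = ∑ ψ_u` takes values in `[1, N]` and is Lipschitz
(locally as a sum of `N` Lipschitz functions, globally because its oscillation is at most `N`), and
`φ_u = ψ_u / S` is the partition of unity: near `u` all other bumps vanish, so `φ_u = 1` there. -/

open scoped NNReal

section Normalization

variable {ι : Type*}

theorem div_tsum_mem_Icc {f : ι → ℝ} (hf : Summable f) (h0 : ∀ i, 0 ≤ f i) (i : ι) :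
    f i / ∑' j, f j ∈ Icc (0 : ℝ) 1 :=
  ⟨div_nonneg (h0 i) (tsum_nonneg h0),
    div_le_one_of_le₀ (hf.le_tsum i fun j _ => h0 j) (tsum_nonneg h0)⟩

theorem hasSum_div_tsum {f : ι → ℝ} (hf : Summable f) (hne : ∑' j, f j ≠ 0) :
    HasSum (fun i => f i / ∑' j, f j) 1 := by
  simpa only [div_self hne] using hf.hasSum.div_const (∑' j, f j)

theorem div_tsum_eq_one_of_forall_ne {f : ι → ℝ} {i : ι} (h : ∀ j ≠ i, f j = 0)
    (hne : ∑' j, f j ≠ 0) : f i / ∑' j, f j = 1 := by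
  rw [tsum_eq_single i h] at hne ⊢
  exact div_self hne

end Normalization

section Lipschitz

variable {X : Type*} [PseudoMetricSpace X]

theorem lipschitzWith_of_dist_le_of_dist_le_mul {Y : Type*} [PseudoMetricSpace Y] {f : X → Y}
    {K M δ : ℝ≥0} (hδ : 0 < δ) (hbdd : ∀ x y, dist (f x) (f y) ≤ M)
    (hloc : ∀ x y, dist x y ≤ δ → dist (f x) (f y) ≤ K * dist x y) :
    LipschitzWith (K + M / δ) f := by
  refine LipschitzWith.of_dist_le_mul fun x y => ?_
  have hδ' : (0 : ℝ) < δ := hδ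
  push_cast
  rcases le_or_gt (dist x y) δ with hxy | hxy
  · calc dist (f x) (f y) ≤ K * dist x y := hloc x y hxy
      _ ≤ (K + M / δ) * dist x y := by gcongr; exact le_add_of_nonneg_right (by positivity)
  · calc dist (f x) (f y) ≤ M := hbdd x y
      _ ≤ M / δ * dist x y := by
          rw [div_mul_eq_mul_div, le_div_iff₀ hδ']
          exact mul_le_mul_of_nonneg_left hxy.le M.2
      _ ≤ (K + M / δ) * dist x y := by gcongr; exact le_add_of_nonneg_left K.2

theorem LipschitzWith.div_of_abs_le_one_of_one_le {f g : X → ℝ} {Kf Kg : ℝ≥0}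
    (hf : LipschitzWith Kf f) (hg : LipschitzWith Kg g) (hf1 : ∀ x, |f x| ≤ 1)
    (hg1 : ∀ x, 1 ≤ g x) : LipschitzWith (Kf + Kg) fun x => f x / g x := by
  refine LipschitzWith.of_dist_le_mul fun x y => ?_
  have hgx := hg1 x
  have hgx0 : 0 < g x := by linarith
  have hgy0 : 0 < g y := by linarith [hg1 y]
  have hsplit : f x / g x - f y / g y = (f x - f y) / g x + f y * (g y - g x) / (g x * g y) := by
    field_simp
    ring
  have h1 : |(f x - f y) / g x| ≤ Kf * dist x y := by
    rw [abs_div, abs_of_pos hgx0, ← Real.dist_eq]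
    exact (div_le_self dist_nonneg hgx).trans (hf.dist_le_mul x y)
  have h2 : |f y * (g y - g x) / (g x * g y)| ≤ Kg * dist x y := by
    rw [abs_div, abs_mul, abs_of_pos (mul_pos hgx0 hgy0)]
    calc |f y| * |g y - g x| / (g x * g y) ≤ |g y - g x| :=
          div_le_of_le_mul₀ (by positivity) (by positivity)
            (by nlinarith [hf1 y, abs_nonneg (f y), abs_nonneg (g y - g x),
              one_le_mul_of_one_le_of_one_le hgx (hg1 y)])
      _ ≤ Kg * dist x y := by rw [← Real.dist_eq, dist_comm]; exact hg.dist_le_mul x y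
  rw [Real.dist_eq, hsplit, NNReal.coe_add, add_mul]
  exact (abs_add_le _ _).trans (add_le_add h1 h2)

end Lipschitz

section LocallyFiniteSum

variable {ι X : Type*} [PseudoMetricSpace X]

def UniformlyLocallyFinite (ψ : ι → X → ℝ) (N : ℕ) (δ : ℝ) : Prop :=
  ∀ x, ∃ F : Finset ι, F.card ≤ N ∧ ∀ i ∉ F, ∀ y ∈ closedBall x δ, ψ i y = 0

namespace UniformlyLocallyFinite

variable {ψ : ι → X → ℝ} {N : ℕ} {δ : ℝ}

theorem summable (h : UniformlyLocallyFinite ψ N δ) (hδ : 0 ≤ δ) (x : X) : Summable (ψ · x) :=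
  let ⟨_, _, hF⟩ := h x
  (hasSum_sum_of_ne_finset_zero fun i hi => hF i hi x (mem_closedBall_self hδ)).summable

theorem dist_tsum_le_mul (h : UniformlyLocallyFinite ψ N δ) {K : ℝ≥0}
    (hK : ∀ i, LipschitzWith K (ψ i)) {x y : X} (hxy : dist x y ≤ δ) :
    dist (∑' i, ψ i x) (∑' i, ψ i y) ≤ N * K * dist x y := by
  obtain ⟨F, hFN, hF⟩ := h x
  rw [tsum_eq_sum fun i hi => hF i hi x (mem_closedBall_self (dist_nonneg.trans hxy)),
    tsum_eq_sum fun i hi => hF i hi y (by rwa [mem_closedBall, dist_comm]), dist_eq_norm,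
    ← Finset.sum_sub_distrib]
  calc ‖∑ i ∈ F, (ψ i x - ψ i y)‖ ≤ ∑ i ∈ F, ‖ψ i x - ψ i y‖ := norm_sum_le _ _
    _ ≤ ∑ _i ∈ F, K * dist x y := Finset.sum_le_sum fun i _ => by
        rw [← dist_eq_norm]; exact (hK i).dist_le_mul x y
    _ = F.card * (K * dist x y) := by rw [Finset.sum_const, nsmul_eq_mul]
    _ ≤ N * K * dist x y := by
        rw [mul_assoc]; gcongr

theorem tsum_mem_Icc (h : UniformlyLocallyFinite ψ N δ) (hδ : 0 ≤ δ) (h0 : ∀ i x, 0 ≤ ψ i x)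
    (h1 : ∀ i x, ψ i x ≤ 1) (x : X) : ∑' i, ψ i x ∈ Icc (0 : ℝ) N := by
  obtain ⟨F, hFN, hF⟩ := h x
  refine ⟨tsum_nonneg (h0 · x), ?_⟩
  rw [tsum_eq_sum fun i hi => hF i hi x (mem_closedBall_self hδ)]
  calc ∑ i ∈ F, ψ i x ≤ ∑ _i ∈ F, (1 : ℝ) := Finset.sum_le_sum fun i _ => h1 i x
    _ ≤ N := by simpa using hFN

theorem lipschitzWith_tsum (h : UniformlyLocallyFinite ψ N δ) (hδ : 0 < δ)
    (h0 : ∀ i x, 0 ≤ ψ i x) (h1 : ∀ i x, ψ i x ≤ 1) {K : ℝ≥0} (hK : ∀ i, LipschitzWith K (ψ i)) :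
    LipschitzWith (N * K + N / δ.toNNReal) fun x => ∑' i, ψ i x := by
  refine lipschitzWith_of_dist_le_of_dist_le_mul (Real.toNNReal_pos.2 hδ) (fun x y => ?_)
    fun x y hxy => ?_
  · have hx := h.tsum_mem_Icc hδ.le h0 h1 x
    have hy := h.tsum_mem_Icc hδ.le h0 h1 y
    rw [Real.dist_eq, abs_sub_le_iff]
    push_cast
    constructor <;> linarith [hx.1, hx.2, hy.1, hy.2]
  · push_cast
    exact h.dist_tsum_le_mul hK (hxy.trans_eq (Real.coe_toNNReal δ hδ.le))

theorem lipschitzWith_div_tsum (h : UniformlyLocallyFinite ψ N δ) (hδ : 0 < δ)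
    (h0 : ∀ i x, 0 ≤ ψ i x) (h1 : ∀ i x, ψ i x ≤ 1) {K : ℝ≥0} (hK : ∀ i, LipschitzWith K (ψ i))
    (hS : ∀ x, 1 ≤ ∑' j, ψ j x) (i : ι) :
    LipschitzWith (K + (N * K + N / δ.toNNReal)) fun x => ψ i x / ∑' j, ψ j x :=
  (hK i).div_of_abs_le_one_of_one_le (h.lipschitzWith_tsum hδ h0 h1 hK)
    (fun x => abs_le.2 ⟨by linarith [h0 i x], h1 i x⟩) hS

end UniformlyLocallyFinite

end LocallyFiniteSum

section Packing

variable {X : Type*} [MetricSpace X] [MeasurableSpace X] [OpensMeasurableSpace X]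
  {μ : Measure X} {D : Set X} {r : ℝ}

theorem IsDiscreteWith.card_mul_le_measure_ball (hD : IsDiscreteWith r D) {c : ℝ≥0∞}
    (hc : ∀ y, c ≤ μ (ball y (r / 2))) {F : Finset X} {x : X} {ρ : ℝ}
    (hF : ↑F ⊆ D ∩ ball x ρ) : F.card * c ≤ μ (ball x (ρ + r / 2)) := by
  have hdisj : (F : Set X).PairwiseDisjoint fun v => ball v (r / 2) := fun u hu v hv huv =>
    ball_disjoint_ball (by linarith [hD u (hF hu).1 v (hF hv).1 huv])
  have hsub : ⋃ v ∈ F, ball v (r / 2) ⊆ ball x (ρ + r / 2) := by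
    refine iUnion₂_subset fun v hv z hz => ?_
    have hvx : dist v x < ρ := (hF hv).2
    rw [mem_ball] at hz ⊢
    linarith [dist_triangle z v x]
  calc F.card * c = F.card • c := (nsmul_eq_mul _ _).symm
    _ ≤ ∑ v ∈ F, μ (ball v (r / 2)) := Finset.card_nsmul_le_sum F _ c fun v _ => hc v
    _ = μ (⋃ v ∈ F, ball v (r / 2)) :=
        (measure_biUnion_finset hdisj fun v _ => measurableSet_ball).symm
    _ ≤ μ (ball x (ρ + r / 2)) := measure_mono hsub

theorem BoundedGeometry.exists_encard_inter_ball_le (hμ : BoundedGeometry μ) (hr : 0 < r)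
    (hD : IsDiscreteWith r D) {ρ : ℝ} (hρ : 0 < ρ) :
    ∃ N : ℕ, ∀ x, (D ∩ ball x ρ).encard ≤ N := by
  obtain ⟨c, _, hc, _, hc'⟩ := hμ (r / 2) (by positivity)
  obtain ⟨_, C, _, hC, hC'⟩ := hμ (ρ + r / 2) (by positivity)
  set N := ⌈(C / c).toNNReal⌉₊
  have hcard : ∀ x (F : Finset X), ↑F ⊆ D ∩ ball x ρ → F.card ≤ N := fun x F hF => by
    have hle : (F.card : ℝ≥0∞) ≤ C / c :=
      (ENNReal.le_div_iff_mul_le (Or.inl hc.ne') (Or.inr hC.ne)).2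
        ((hD.card_mul_le_measure_ball (fun y => (hc' y).1) hF).trans (hC' x).2)
    have h := ENNReal.toNNReal_mono (ENNReal.div_lt_top hC.ne hc.ne').ne hle
    rw [ENNReal.toNNReal_natCast] at h
    exact_mod_cast h.trans (Nat.le_ceil _)
  refine ⟨N, fun x => ?_⟩
  by_contra! hlt
  obtain ⟨t, ht, htN⟩ := exists_subset_encard_eq (Order.add_one_le_of_lt hlt)
  obtain ⟨F, rfl⟩ := (finite_of_encard_eq_coe htN).exists_finset_coe
  rw [encard_coe_eq_coe_finsetCard] at htN
  have := hcard x F ht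
  norm_cast at htN
  omega

end Packing

section DeloneBump

open scoped Classical

variable {X : Type*} [MetricSpace X] {D : Set X} {r R : ℝ} {u x : X}

/-- The first factor is `1` on `closedBall u R` and `0` outside `ball u (2 * R)`; the second is
`≤ 0` within `r / 6` of `D \ {u}` and `≥ 1` at distance `r / 4` from it. The case split is needed
because `infDist x ∅ = 0`. -/
noncomputable def deloneBump (D : Set X) (r R : ℝ) (u x : X) : ℝ :=
  max 0 (min (min 1 (2 - R⁻¹ * dist x u))
    (if (D \ {u}).Nonempty then 12 / r * (infDist x (D \ {u}) - r / 6) else 1))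

theorem deloneBump_nonneg : 0 ≤ deloneBump D r R u x :=
  le_max_left _ _

theorem deloneBump_le_one : deloneBump D r R u x ≤ 1 :=
  max_le zero_le_one ((min_le_left _ _).trans (min_le_left _ _))

theorem deloneBump_eq_zero_of_le_dist (hR : 0 < R) (h : 2 * R ≤ dist x u) :
    deloneBump D r R u x = 0 := by
  have hβ : 2 - R⁻¹ * dist x u ≤ 0 := by
    rw [sub_nonpos, le_inv_mul_iff₀ hR]; linarith
  exact max_eq_left (((min_le_left _ _).trans (min_le_right _ _)).trans hβ)

theorem deloneBump_eq_zero_of_dist_lt (hr : 0 < r) {v : X} (hv : v ∈ D) (hvu : v ≠ u)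
    (h : dist x v < r / 6) : deloneBump D r R u x = 0 := by
  have hne : (D \ {u}).Nonempty := ⟨v, hv, hvu⟩
  have hγ : 12 / r * (infDist x (D \ {u}) - r / 6) ≤ 0 :=
    mul_nonpos_of_nonneg_of_nonpos (by positivity)
      (by linarith [infDist_le_dist_of_mem (x := x) (show v ∈ D \ {u} from ⟨hv, hvu⟩)])
  unfold deloneBump
  rw [if_pos hne]
  exact max_eq_left ((min_le_right _ _).trans hγ)

theorem deloneBump_eq_one (hr : 0 < r) (hR : 0 < R) (hd : dist x u ≤ R)
    (hfar : ∀ w ∈ D, w ≠ u → r / 4 ≤ dist x w) : deloneBump D r R u x = 1 := by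
  have hβ : 1 ≤ 2 - R⁻¹ * dist x u := by
    linarith [inv_mul_le_one_of_le₀ hd hR.le]
  have hγ : 1 ≤ if (D \ {u}).Nonempty then 12 / r * (infDist x (D \ {u}) - r / 6) else 1 := by
    split_ifs with hne
    · have hinf : r / 4 ≤ infDist x (D \ {u}) := (le_infDist hne).2 fun w hw => hfar w hw.1 hw.2
      rw [div_mul_eq_mul_div, le_div_iff₀ hr]
      linarith
    · exact le_rfl
  unfold deloneBump
  rw [min_eq_left hβ, min_eq_left hγ, max_eq_right zero_le_one]

theorem exists_deloneBump_eq_one (hr : 0 < r) (hR : 0 < R) (hD : IsDiscreteWith r D)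
    (hdense : IsDenseWith R D) (x : X) : ∃ u ∈ D, deloneBump D r R u x = 1 := by
  obtain ⟨u, hu, hxu⟩ := hdense x
  by_cases h : ∃ v ∈ D, v ≠ u ∧ dist x v < r / 4
  · obtain ⟨v, hv, hvu, hxv⟩ := h
    refine ⟨v, hv, deloneBump_eq_one hr hR ?_ fun w hw hwv => ?_⟩
    · linarith [hD u hu v hv hvu.symm, dist_triangle_left u v x]
    · linarith [hD v hv w hw hwv.symm, dist_triangle_left v w x]
  · push Not at h
    exact ⟨u, hu, deloneBump_eq_one hr hR hxu h⟩

theorem deloneBump_lipschitzWith (D : Set X) (r R : ℝ) (u : X) :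
    LipschitzWith (max ‖R⁻¹‖₊ ‖12 / r‖₊) (deloneBump D r R u) := by
  have hβ : LipschitzWith ‖R⁻¹‖₊ fun x => 2 - R⁻¹ * dist x u := by
    simpa using (LipschitzWith.const (2 : ℝ)).sub
      ((lipschitzWith_smul R⁻¹).comp (LipschitzWith.dist_left u))
  have hγ : LipschitzWith ‖12 / r‖₊ fun x =>
      if (D \ {u}).Nonempty then 12 / r * (infDist x (D \ {u}) - r / 6) else 1 := by
    by_cases hne : (D \ {u}).Nonempty
    · simpa [hne, Function.comp_def] using (lipschitzWith_smul (12 / r)).comp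
        ((lipschitz_infDist_pt (D \ {u})).sub (LipschitzWith.const (r / 6)))
    · simpa [hne] using (LipschitzWith.const (1 : ℝ)).weaken zero_le
  exact ((hβ.const_min 1).min hγ).const_max 0

theorem uniformlyLocallyFinite_deloneBump {N : ℕ} (hR : 0 < R)
    (hN : ∀ x, (D ∩ ball x (3 * R)).encard ≤ N) :
    UniformlyLocallyFinite (fun u : D => deloneBump D r R u) N R := by
  intro x
  have hfin : (Subtype.val ⁻¹' ball x (3 * R) : Set D).encard ≤ N := by
    rw [← Subtype.val_injective.encard_image, Subtype.image_preimage_coe]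
    exact hN x
  have hF := finite_of_encard_le_coe hfin
  refine ⟨hF.toFinset, ?_, fun u hu y hy => deloneBump_eq_zero_of_le_dist hR ?_⟩
  · rwa [hF.encard_eq_coe_toFinset_card, Nat.cast_le] at hfin
  · have hux : 3 * R ≤ dist (u : X) x := by simpa using hu
    have hyx : dist y x ≤ R := hy
    linarith [dist_triangle (u : X) y x, dist_comm (u : X) y]

end DeloneBump

/-- Existence of a partition of unity `{φ_u}_{u ∈ D}` subordinate to an `(r,R)`-Delone
set `D` in a metric measure space of bounded geometry, satisfying (p1)–(p4). -/
theorem exists_partition_of_unity {X : Type*} [MetricSpace X]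
    [MeasurableSpace X] [BorelSpace X] (μ : Measure X) (hbg : BoundedGeometry μ)
    (D : Set X) (r R : ℝ) (hr : 0 < r) (hR : 0 < R)
    (hdisc : IsDiscreteWith r D) (hdense : IsDenseWith R D) :
    ∃ φ : X → X → ℝ,
      (∀ u ∈ D, ∀ x : X, φ u x ∈ Icc (0 : ℝ) 1) ∧
      (∀ u ∈ D, ∀ x : X, 2 * R ≤ dist x u → φ u x = 0) ∧
      (∀ u ∈ D, ∀ x : X, dist x u < r / 6 → φ u x = 1) ∧
      (∀ x : X, HasSum (fun u : D => φ u.1 x) 1) ∧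
      (∃ L : NNReal, 0 < L ∧ ∀ u ∈ D, LipschitzWith L (φ u)) := by
  obtain ⟨N, hN⟩ := hbg.exists_encard_inter_ball_le hr hdisc (by positivity : (0 : ℝ) < 3 * R)
  set ψ : D → X → ℝ := fun u => deloneBump D r R u
  have hloc : UniformlyLocallyFinite ψ N R := uniformlyLocallyFinite_deloneBump hR hN
  have hsum : ∀ x, Summable (ψ · x) := hloc.summable hR.le
  have hone : ∀ x, 1 ≤ ∑' u, ψ u x := fun x => by
    obtain ⟨u, hu, h1⟩ := exists_deloneBump_eq_one hr hR hdisc hdense x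
    exact h1.symm.le.trans ((hsum x).le_tsum ⟨u, hu⟩ fun _ _ => deloneBump_nonneg)
  have hlip := hloc.lipschitzWith_div_tsum hR (fun _ _ => deloneBump_nonneg)
    (fun _ _ => deloneBump_le_one) (fun u => deloneBump_lipschitzWith D r R u) hone
  refine ⟨fun u x => deloneBump D r R u x / ∑' v, ψ v x,
    fun u hu x => div_tsum_mem_Icc (hsum x) (fun _ => deloneBump_nonneg) ⟨u, hu⟩,
    fun u _ x hx => by simp [deloneBump_eq_zero_of_le_dist hR hx],
    fun u hu x hx => div_tsum_eq_one_of_forall_ne (f := (ψ · x)) (i := ⟨u, hu⟩) (fun v hv => ?_) ?_,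
    fun x => hasSum_div_tsum (hsum x) (by linarith [hone x]),
    ⟨_, add_pos_of_nonneg_of_pos zero_le one_pos,
      fun u hu => (hlip ⟨u, hu⟩).weaken (le_add_of_nonneg_right zero_le_one)⟩⟩
  · exact deloneBump_eq_zero_of_dist_lt hr hu (fun h => hv (Subtype.ext h.symm)) hx
  · linarith [hone x]
end

section
/- Let (X,d) be a metric space and let D ⊆ X be an (r,R)-Delone set. For u ∈ D set W_u = B_{2R}(u) \ ⋃_{v∈D, v≠u} \overline{B_{r/6}(v)} (the open ball of radius 2R around u minus the union of the closed balls of radius r/6 around all other points of D). Then {W_u}_{u∈D} is an open cover of X, and its Lebesgue number is positive: setting a = min(5r/12, r/4, R), for every x ∈ X there exists u ∈ D with B_a(x) ⊆ W_u. -/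
/-! The closed `r/6`-balls around the points of an `r`-discrete set are pairwise far apart, so
their union is locally finite and hence closed; this makes every `W_u` open. For the Lebesgue
number, pick `u₀ ∈ D` with `d(x, u₀) ≤ R`. If some other `v ∈ D` lies within `r/6 + a` of `x`,
then `x` is far from every point of `D` other than `v` and we take `W_v`; otherwise `W_{u₀}` works.
In either case the triangle inequality gives `B_a(x) ⊆ W_u`. -/

open Metric Set

section

variable {X : Type*} [MetricSpace X] {D : Set X} {r : ℝ}

def voronoiCell (D : Set X) (ρ s : ℝ) (u : X) : Set X :=
  ball u ρ \ ⋃ v ∈ D \ {u}, closedBall v s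

namespace IsDiscreteWith

lemma mono {D' : Set X} (hD : IsDiscreteWith r D) (h : D' ⊆ D) : IsDiscreteWith r D' :=
  fun x hx y hy hxy => hD x (h hx) y (h hy) hxy

lemma sub_dist_le_dist (hD : IsDiscreteWith r D) {v w : X} (hv : v ∈ D) (hw : w ∈ D)
    (hwv : w ≠ v) (x : X) : r - dist x v ≤ dist x w := by
  have := hD w hw v hv hwv
  have := dist_triangle_left w v x
  linarith

lemma locallyFinite_closedBall (hD : IsDiscreteWith r D) {s : ℝ} (hs : s < r / 2) :
    LocallyFinite fun v : D => closedBall (v : X) s := by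
  intro x
  refine ⟨ball x (r / 2 - s), ball_mem_nhds x (by linarith), ?_⟩
  refine Set.Subsingleton.finite ?_
  rintro v ⟨y, hyv, hyx⟩ w ⟨z, hzw, hzx⟩
  by_contra hne
  have hr := hD v v.2 w w.2 (Subtype.coe_ne_coe.mpr hne)
  rw [mem_closedBall] at hyv hzw
  rw [mem_ball] at hyx hzx
  have := dist_triangle4 (v : X) y z w
  have := dist_triangle_right y z x
  linarith [dist_comm (v : X) y]

lemma isClosed_biUnion_closedBall (hD : IsDiscreteWith r D) {s : ℝ} (hs : s < r / 2) :
    IsClosed (⋃ v ∈ D, closedBall v s) := by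
  rw [biUnion_eq_iUnion]
  exact (hD.locallyFinite_closedBall hs).isClosed_iUnion fun _ => isClosed_closedBall

end IsDiscreteWith

lemma isOpen_voronoiCell (hD : IsDiscreteWith r D) {ρ s : ℝ} (hs : s < r / 2) (u : X) :
    IsOpen (voronoiCell D ρ s u) :=
  isOpen_ball.sdiff ((hD.mono sdiff_subset).isClosed_biUnion_closedBall hs)

lemma ball_subset_voronoiCell {ρ s a : ℝ} {x u : X} (hxu : dist x u + a ≤ ρ)
    (hfar : ∀ w ∈ D, w ≠ u → s + a ≤ dist x w) : ball x a ⊆ voronoiCell D ρ s u := by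
  intro y hy
  rw [mem_ball'] at hy
  refine ⟨?_, ?_⟩
  · rw [mem_ball]
    linarith [dist_triangle_left y u x]
  · simp only [mem_iUnion, mem_closedBall, mem_sdiff, mem_singleton_iff, not_exists, not_le]
    rintro w ⟨hw, hwu⟩
    linarith [hfar w hw hwu, dist_triangle x y w]

lemma exists_ball_subset_voronoiCell {R a : ℝ} (hr : 0 < r) (hdisc : IsDiscreteWith r D)
    (hdense : IsDenseWith R D) (har : a ≤ r / 4) (haR : a ≤ R) (x : X) :
    ∃ u ∈ D, ball x a ⊆ voronoiCell D (2 * R) (r / 6) u := by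
  obtain ⟨u₀, hu₀, hxu₀⟩ := hdense x
  by_cases hnear : ∃ v ∈ D, v ≠ u₀ ∧ dist x v ≤ r / 6 + a
  · obtain ⟨v, hv, hvu₀, hxv⟩ := hnear
    have hrR : 7 * r ≤ 12 * R := by
      linarith [hdisc.sub_dist_le_dist hv hu₀ hvu₀.symm x]
    refine ⟨v, hv, ball_subset_voronoiCell (by linarith) fun w hw hwv => ?_⟩
    linarith [hdisc.sub_dist_le_dist hv hw hwv x]
  · push Not at hnear
    exact ⟨u₀, hu₀, ball_subset_voronoiCell (by linarith) fun w hw hwu₀ =>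
      (hnear w hw hwu₀).le⟩

end

theorem voronoi_type_cover_general {X : Type*} [MetricSpace X]
    (D : Set X) (r R : ℝ) (hr : 0 < r)
    (hdisc : IsDiscreteWith r D) (hdense : IsDenseWith R D) :
    (∀ u ∈ D, IsOpen (ball u (2 * R) \ ⋃ v ∈ D \ {u}, closedBall v (r / 6))) ∧
    (∀ x : X, ∃ u ∈ D, ball x (min (5 * r / 12) (min (r / 4) R)) ⊆
      ball u (2 * R) \ ⋃ v ∈ D \ {u}, closedBall v (r / 6)) :=
  ⟨fun u _ => isOpen_voronoiCell hdisc (by linarith) u,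
    exists_ball_subset_voronoiCell hr hdisc hdense
      ((min_le_right _ _).trans (min_le_left _ _)) ((min_le_right _ _).trans (min_le_right _ _))⟩

/-- For an `(r,R)`-Delone set `D`, the sets
`W_u = B_{2R}(u) \ ⋃_{v ∈ D, v ≠ u} closedBall v (r/6)` form an open cover of `X`
with Lebesgue number at least `a = min (5r/12) (min (r/4) R)`. -/
theorem voronoi_type_cover {X : Type*} [MetricSpace X]
    (D : Set X) (r R : ℝ) (hr : 0 < r) (hR : 0 < R)
    (hdisc : IsDiscreteWith r D) (hdense : IsDenseWith R D) :
    (∀ u ∈ D, IsOpen (ball u (2 * R) \ ⋃ v ∈ D \ {u}, closedBall v (r / 6))) ∧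
    (∀ x : X, ∃ u ∈ D, ball x (min (5 * r / 12) (min (r / 4) R)) ⊆
      ball u (2 * R) \ ⋃ v ∈ D \ {u}, closedBall v (r / 6)) :=
  voronoi_type_cover_general D r R hr hdisc hdense
end

section
/- Let (X,d,μ) be a metric measure space of bounded geometry, let D ⊆ X be an (r,R)-Delone set, and let {φ_u}_{u∈D} be a family of Borel measurable functions φ_u : X → [0,1] such that φ_u(x) = 0 whenever d(x,u) ≥ 2R, φ_u(x) = 1 whenever d(x,u) < r/6, and Σ_{u∈D} φ_u(x) = 1 for all x ∈ X (so each φ_u ∈ L²(X,μ)). Then there exists a bounded linear operator G on ℓ²(D) (over ℂ) such that ⟨δ_u, G δ_v⟩ = ∫_X φ_u φ_v dμ for all u,v ∈ D (δ_u denoting the standard basis vectors), and G is positive and invertible. -/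
open Metric Set MeasureTheory ENNReal
open scoped Classical

/-!
The Gram matrix is `T† T` for the synthesis operator `T : ℓ²(D) → L²(μ)`, `T ξ = ∑ ξ_u φ_u`, so
it is bounded and positive, and it is invertible as soon as `T` is bounded below.

Since `∑ φ_u = 1`, Cauchy–Schwarz gives `|T ξ (x)|² ≤ ∑ φ_u(x) |ξ_u|²` pointwise; integrating,
`‖T ξ‖² ≤ (sup_u ‖φ_u‖₁) ‖ξ‖² ≤ (sup_u μ(B(u, 2R))) ‖ξ‖²`. Conversely, on the pairwise disjoint
balls `B(u, r/6)` the partition of unity reduces to `φ_u = 1`, so `T ξ = ξ_u` there and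
`‖T ξ‖² ≥ (inf_u μ(B(u, r/6))) ‖ξ‖²`. Bounded geometry controls both measures; it also makes the
`r`-discrete set `D` countable, since a ball of finite measure contains only finitely many of the
disjoint balls `B(u, r/2)`, each of measure bounded below.
-/

open scoped NNReal InnerProductSpace InnerProduct
open Function

theorem ENNReal.tsum_mul_sq_le {ι : Type*} (w b : ι → ℝ≥0) :
    (∑' i, (w i * b i : ℝ≥0∞)) ^ 2 ≤ (∑' i, (w i : ℝ≥0∞)) * ∑' i, (w i * b i ^ 2 : ℝ≥0∞) := by
  refine le_of_tendsto' ((ENNReal.continuous_pow 2).tendsto _ |>.comp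
    ENNReal.summable.hasSum) fun s => ?_
  have hcs : (∑ i ∈ s, w i * b i) ^ 2 ≤ (∑ i ∈ s, w i) * ∑ i ∈ s, w i * b i ^ 2 :=
    Finset.sum_sq_le_sum_mul_sum_of_sq_le_mul s (fun _ _ => zero_le) (fun _ _ => zero_le)
      fun i _ => (by ring : (w i * b i) ^ 2 = w i * (w i * b i ^ 2)).le
  calc (∑ i ∈ s, (w i * b i : ℝ≥0∞)) ^ 2
      = ((((∑ i ∈ s, w i * b i) ^ 2 : ℝ≥0) : ℝ≥0∞)) := by push_cast; rfl
    _ ≤ (((∑ i ∈ s, w i) * ∑ i ∈ s, w i * b i ^ 2 : ℝ≥0) : ℝ≥0∞) := by exact_mod_cast hcs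
    _ ≤ _ := by
      push_cast
      exact mul_le_mul' (ENNReal.sum_le_tsum s) (ENNReal.sum_le_tsum s)

theorem lp.tsum_enorm_sq {ι : Type*} {E : ι → Type*} [∀ i, NormedAddCommGroup (E i)]
    (ξ : lp E 2) : ∑' i, ‖ξ i‖ₑ ^ 2 = ‖ξ‖ₑ ^ 2 := by
  have h := lp.hasSum_norm (p := 2) (by norm_num) ξ
  simp only [ENNReal.toReal_ofNat, Real.rpow_two] at h
  simp_rw [← ofReal_norm, ← ENNReal.ofReal_pow (norm_nonneg _), ← h.tsum_eq]
  rw [ENNReal.ofReal_tsum_of_nonneg (fun _ => by positivity) h.summable]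

theorem MeasureTheory.eLpNorm_two_sq {X E : Type*} [MeasurableSpace X] {μ : Measure X}
    [NormedAddCommGroup E] (f : X → E) :
    eLpNorm f 2 μ ^ 2 = ∫⁻ x, ‖f x‖ₑ ^ 2 ∂μ := by
  simpa using eLpNorm_nnreal_pow_eq_lintegral (f := f) (μ := μ) (p := 2) two_ne_zero

theorem mul_sq_norm_le_of_mul_sq_enorm_le {E F : Type*} [SeminormedAddGroup E]
    [SeminormedAddGroup F] {x : E} {y : F} {a b : ℝ≥0∞} (hb : b ≠ ⊤)
    (h : a * ‖x‖ₑ ^ 2 ≤ b * ‖y‖ₑ ^ 2) : a.toReal * ‖x‖ ^ 2 ≤ b.toReal * ‖y‖ ^ 2 := by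
  simpa [ENNReal.toReal_mul, toReal_enorm] using ENNReal.toReal_mono (by finiteness) h

theorem ContinuousLinearMap.isUnit_adjoint_comp_self_of_mul_enorm_sq_le {𝕜 E F : Type*}
    [RCLike 𝕜] [NormedAddCommGroup E] [InnerProductSpace 𝕜 E] [CompleteSpace E]
    [NormedAddCommGroup F] [InnerProductSpace 𝕜 F] [CompleteSpace F]
    (T : E →L[𝕜] F) {c : ℝ≥0∞} (hc : 0 < c) (h : ∀ x, c * ‖x‖ₑ ^ 2 ≤ ‖T x‖ₑ ^ 2) :
    IsUnit (T† ∘L T) := by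
  have hc' : 0 < (min c 1).toNNReal := ENNReal.toNNReal_pos (by positivity) (by simp)
  refine (T† ∘L T).isUnit_of_forall_le_norm_inner_map hc' fun x => ?_
  have hx := mul_sq_norm_le_of_mul_sq_enorm_le one_ne_top
    ((mul_le_mul_left (min_le_left c 1) _).trans ((h x).trans_eq (one_mul _).symm))
  calc ‖x‖ ^ 2 * (min c 1).toNNReal = (min c 1).toReal * ‖x‖ ^ 2 := mul_comm _ _
    _ ≤ ‖T x‖ ^ 2 := by simpa using hx
    _ = RCLike.re ⟪(T† ∘L T) x, x⟫_𝕜 := T.apply_norm_sq_eq_inner_adjoint_left x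
    _ ≤ ‖⟪(T† ∘L T) x, x⟫_𝕜‖ := RCLike.re_le_norm _

theorem lintegral_enorm_le_measure {X : Type*} [MeasurableSpace X] {μ : Measure X} {f : X → ℝ}
    (hf : ∀ x, |f x| ≤ 1) {s : Set X} (hs : MeasurableSet s)
    (hfs : ∀ x ∉ s, f x = 0) : ∫⁻ x, ‖f x‖ₑ ∂μ ≤ μ s := by
  rw [← lintegral_indicator_one hs]
  refine lintegral_mono fun x => ?_
  by_cases hx : x ∈ s
  · simpa [hx, Real.enorm_eq_ofReal_abs] using hf x
  · simp [hx, hfs x hx]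

structure IsMeasurablePartitionOfUnity {ι X : Type*} [MeasurableSpace X] (φ : ι → X → ℝ) :
    Prop where
  measurable : ∀ i, Measurable (φ i)
  nonneg : ∀ i x, 0 ≤ φ i x
  hasSum : ∀ x, HasSum (fun i => φ i x) 1

section Synthesis

variable {𝕜 ι X : Type*} [RCLike 𝕜] {φ : ι → X → ℝ}

noncomputable def synthesis (φ : ι → X → ℝ) (a : ι → 𝕜) (x : X) : 𝕜 := ∑' i, a i * φ i x

theorem synthesis_smul (c : 𝕜) (a : ι → 𝕜) : synthesis φ (c • a) = c • synthesis φ a := by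
  ext x
  simp only [synthesis, Pi.smul_apply, smul_eq_mul, mul_assoc, tsum_mul_left]

theorem synthesis_lp_single [DecidableEq ι] (i : ι) (c : 𝕜) :
    synthesis φ ⇑(lp.single 2 i c) = fun x => c * φ i x := by
  ext x
  rw [lp.coeFn_single, synthesis,
    tsum_eq_single i fun j hj => by rw [Pi.single_eq_of_ne hj, zero_mul], Pi.single_eq_same]

variable [MeasurableSpace X] {μ : Measure X}

namespace IsMeasurablePartitionOfUnity

variable (hφ : IsMeasurablePartitionOfUnity φ)
include hφ

theorem tsum_enorm_eq_one (x : X) : ∑' i, ‖φ i x‖ₑ = 1 := by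
  simp_rw [Real.enorm_of_nonneg (hφ.nonneg _ x)]
  rw [← ENNReal.ofReal_tsum_of_nonneg (hφ.nonneg · x) (hφ.hasSum x).summable,
    (hφ.hasSum x).tsum_eq, ENNReal.ofReal_one]

theorem eq_zero_of_eq_one {i j : ι} (hij : i ≠ j) {x : X} (hi : φ i x = 1) : φ j x = 0 := by
  have h := sum_le_hasSum {i, j} (fun k _ => hφ.nonneg k x) (hφ.hasSum x)
  rw [Finset.sum_pair hij, hi] at h
  linarith [hφ.nonneg j x]

theorem synthesis_eq_of_eq_one {i : ι} {x : X} (hi : φ i x = 1) (a : ι → 𝕜) :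
    synthesis φ a x = a i := by
  rw [synthesis, tsum_eq_single i fun j hj => by
    rw [hφ.eq_zero_of_eq_one (Ne.symm hj) hi, RCLike.ofReal_zero, mul_zero], hi,
    RCLike.ofReal_one, mul_one]

theorem summable_mul {a : ι → 𝕜} {M : ℝ} (ha : ∀ i, ‖a i‖ ≤ M) (x : X) :
    Summable fun i => a i * φ i x :=
  ((hφ.hasSum x).summable.mul_left M).of_norm_bounded fun i => by
    rw [norm_mul, RCLike.norm_ofReal, abs_of_nonneg (hφ.nonneg i x)]
    exact mul_le_mul_of_nonneg_right (ha i) (hφ.nonneg i x)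

theorem synthesis_lp_add (ξ η : lp (fun _ : ι => 𝕜) 2) :
    synthesis φ ⇑(ξ + η) = synthesis φ ξ + synthesis φ η := by
  ext x
  simp only [synthesis, lp.coeFn_add, Pi.add_apply, add_mul]
  exact (hφ.summable_mul (lp.norm_apply_le_norm two_ne_zero ξ) x).tsum_add
    (hφ.summable_mul (lp.norm_apply_le_norm two_ne_zero η) x)

theorem measurable_synthesis [Countable ι] (a : ι → 𝕜) : Measurable (synthesis φ a) :=
  Measurable.tsum fun i => measurable_const.mul (RCLike.measurable_ofReal.comp (hφ.measurable i))

theorem enorm_synthesis_sq_le (a : ι → 𝕜) (x : X) :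
    ‖synthesis φ a x‖ₑ ^ 2 ≤ ∑' i, ‖φ i x‖ₑ * ‖a i‖ₑ ^ 2 := by
  have hcs := ENNReal.tsum_mul_sq_le (fun i => ‖φ i x‖₊) (fun i => ‖a i‖₊)
  simp only [← enorm_eq_nnnorm, hφ.tsum_enorm_eq_one, one_mul] at hcs
  refine le_trans (pow_le_pow_left₀ zero_le ?_ 2) hcs
  refine enorm_tsum_le_tsum_enorm.trans (le_of_eq (tsum_congr fun i => ?_))
  rw [enorm_mul, mul_comm]
  congr 1
  simp [enorm_eq_nnnorm]

theorem lintegral_enorm_synthesis_sq_le [Countable ι] {C : ℝ≥0∞}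
    (hC : ∀ i, ∫⁻ x, ‖φ i x‖ₑ ∂μ ≤ C) (a : ι → 𝕜) :
    ∫⁻ x, ‖synthesis φ a x‖ₑ ^ 2 ∂μ ≤ C * ∑' i, ‖a i‖ₑ ^ 2 :=
  calc ∫⁻ x, ‖synthesis φ a x‖ₑ ^ 2 ∂μ
      ≤ ∫⁻ x, ∑' i, ‖φ i x‖ₑ * ‖a i‖ₑ ^ 2 ∂μ := lintegral_mono (hφ.enorm_synthesis_sq_le a)
    _ = ∑' i, (∫⁻ x, ‖φ i x‖ₑ ∂μ) * ‖a i‖ₑ ^ 2 := by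
      rw [lintegral_tsum fun i => ((hφ.measurable i).enorm.mul_const _).aemeasurable]
      exact tsum_congr fun i => lintegral_mul_const _ (hφ.measurable i).enorm
    _ ≤ ∑' i, C * ‖a i‖ₑ ^ 2 := ENNReal.tsum_le_tsum fun i => mul_le_mul_left (hC i) _
    _ = C * ∑' i, ‖a i‖ₑ ^ 2 := ENNReal.tsum_mul_left

theorem le_lintegral_enorm_synthesis_sq [Countable ι] {B : ι → Set X}
    (hB : ∀ i, MeasurableSet (B i)) (hBd : Pairwise (Disjoint on B))
    (hφB : ∀ i, ∀ x ∈ B i, φ i x = 1) {c : ℝ≥0∞} (hc : ∀ i, c ≤ μ (B i)) (a : ι → 𝕜) :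
    c * ∑' i, ‖a i‖ₑ ^ 2 ≤ ∫⁻ x, ‖synthesis φ a x‖ₑ ^ 2 ∂μ :=
  calc c * ∑' i, ‖a i‖ₑ ^ 2
      = ∑' i, c * ‖a i‖ₑ ^ 2 := ENNReal.tsum_mul_left.symm
    _ ≤ ∑' i, ∫⁻ _ in B i, ‖a i‖ₑ ^ 2 ∂μ := ENNReal.tsum_le_tsum fun i => by
      rw [setLIntegral_const, mul_comm]
      exact mul_le_mul_right (hc i) _
    _ = ∑' i, ∫⁻ x in B i, ‖synthesis φ a x‖ₑ ^ 2 ∂μ := tsum_congr fun i =>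
      setLIntegral_congr_fun (hB i) fun x hx => by rw [hφ.synthesis_eq_of_eq_one (hφB i x hx)]
    _ = ∫⁻ x in ⋃ i, B i, ‖synthesis φ a x‖ₑ ^ 2 ∂μ := (lintegral_iUnion hB hBd _).symm
    _ ≤ ∫⁻ x, ‖synthesis φ a x‖ₑ ^ 2 ∂μ := setLIntegral_le_lintegral _ _

variable [Countable ι] {C : ℝ≥0∞} (hC : ∀ i, ∫⁻ x, ‖φ i x‖ₑ ∂μ ≤ C) (hC_top : C ≠ ⊤)
include hC hC_top

theorem memLp_synthesis (ξ : lp (fun _ : ι => 𝕜) 2) : MemLp (synthesis φ ξ) 2 μ := by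
  refine ⟨(hφ.measurable_synthesis ξ).aestronglyMeasurable, ?_⟩
  rw [← ENNReal.pow_lt_top_iff (n := 2) |>.trans (or_iff_left two_ne_zero), eLpNorm_two_sq]
  refine (hφ.lintegral_enorm_synthesis_sq_le hC ξ).trans_lt ?_
  rw [lp.tsum_enorm_sq]
  finiteness

theorem enorm_toLp_synthesis_sq (ξ : lp (fun _ : ι => 𝕜) 2) :
    ‖(hφ.memLp_synthesis hC hC_top ξ).toLp‖ₑ ^ 2 = ∫⁻ x, ‖synthesis φ ξ x‖ₑ ^ 2 ∂μ := by
  rw [Lp.enorm_toLp, eLpNorm_two_sq]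

noncomputable def synthesisL2 : lp (fun _ : ι => 𝕜) 2 →L[𝕜] Lp 𝕜 2 μ :=
  LinearMap.mkContinuous
    { toFun := fun ξ => (hφ.memLp_synthesis hC hC_top ξ).toLp
      map_add' := fun ξ η => by
        rw [← MemLp.toLp_add]
        exact MemLp.toLp_congr _ _ (.of_eq (hφ.synthesis_lp_add ξ η))
      map_smul' := fun c ξ => by
        rw [RingHom.id_apply, ← MemLp.toLp_const_smul]
        exact MemLp.toLp_congr _ _ (.of_eq (by rw [lp.coeFn_smul, synthesis_smul])) }
    √C.toReal fun ξ => by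
      have h : 1 * ‖(hφ.memLp_synthesis hC hC_top ξ).toLp‖ₑ ^ 2 ≤ C * ‖ξ‖ₑ ^ 2 := by
        rw [one_mul, hφ.enorm_toLp_synthesis_sq hC hC_top, ← lp.tsum_enorm_sq]
        exact hφ.lintegral_enorm_synthesis_sq_le hC ξ
      rw [← pow_le_pow_iff_left₀ (norm_nonneg _) (by positivity) two_ne_zero, mul_pow,
        Real.sq_sqrt ENNReal.toReal_nonneg]
      simpa using mul_sq_norm_le_of_mul_sq_enorm_le hC_top h

theorem synthesisL2_apply (ξ : lp (fun _ : ι => 𝕜) 2) :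
    hφ.synthesisL2 hC hC_top ξ = (hφ.memLp_synthesis hC hC_top ξ).toLp :=
  rfl

theorem le_enorm_synthesisL2_sq {B : ι → Set X} (hB : ∀ i, MeasurableSet (B i))
    (hBd : Pairwise (Disjoint on B)) (hφB : ∀ i, ∀ x ∈ B i, φ i x = 1) {c : ℝ≥0∞}
    (hc : ∀ i, c ≤ μ (B i)) (ξ : lp (fun _ : ι => 𝕜) 2) :
    c * ‖ξ‖ₑ ^ 2 ≤ ‖hφ.synthesisL2 hC hC_top ξ‖ₑ ^ 2 := by
  rw [synthesisL2_apply, hφ.enorm_toLp_synthesis_sq hC hC_top, ← lp.tsum_enorm_sq]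
  exact hφ.le_lintegral_enorm_synthesis_sq hB hBd hφB hc ξ

theorem inner_synthesisL2_single [DecidableEq ι] (i j : ι) :
    ⟪hφ.synthesisL2 hC hC_top (lp.single 2 i (1 : 𝕜)),
        hφ.synthesisL2 hC hC_top (lp.single 2 j (1 : 𝕜))⟫_𝕜 =
      ((∫ x, φ i x * φ j x ∂μ : ℝ) : 𝕜) := by
  rw [L2.inner_def, ← integral_ofReal]
  refine integral_congr_ae ?_
  filter_upwards [(hφ.memLp_synthesis hC hC_top (lp.single 2 i (1 : 𝕜))).coeFn_toLp,
    (hφ.memLp_synthesis hC hC_top (lp.single 2 j (1 : 𝕜))).coeFn_toLp] with x hi hj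
  rw [synthesisL2_apply, synthesisL2_apply, hi, hj]
  simp [synthesis_lp_single, mul_comm]

end IsMeasurablePartitionOfUnity

end Synthesis

section Delone

variable {X : Type*} [MetricSpace X]

theorem IsDiscreteWith.pairwiseDisjoint_ball {r ε : ℝ} {D : Set X} (hD : IsDiscreteWith r D)
    (hε : 2 * ε ≤ r) : D.PairwiseDisjoint fun u => ball u ε := fun u hu v hv huv =>
  ball_disjoint_ball (by linarith [hD u hu v hv huv])

variable [MeasurableSpace X] [BorelSpace X] {μ : Measure X}

theorem BoundedGeometry.finite_inter_ball (hμ : BoundedGeometry μ) {r : ℝ} (hr : 0 < r)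
    {D : Set X} (hD : IsDiscreteWith r D) (x : X) {ρ : ℝ} (hρ : 0 ≤ ρ) :
    (D ∩ ball x ρ).Finite := by
  obtain ⟨c, _, hc, _, hcμ⟩ := hμ (r / 2) (by positivity)
  obtain ⟨_, C, _, hC, hCμ⟩ := hμ (ρ + r / 2) (by positivity)
  have hfin := Measure.finite_const_le_meas_of_disjoint_iUnion μ hc
    (As := fun u : ↥(D ∩ ball x ρ) => ball (u : X) (r / 2)) (fun _ => measurableSet_ball)
    (fun u v huv => hD.pairwiseDisjoint_ball (by linarith) u.2.1 v.2.1
      (Subtype.coe_injective.ne huv))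
    (ne_top_of_le_ne_top hC.ne ((measure_mono (iUnion_subset fun u => ?_)).trans (hCμ x).2))
  · exact Set.finite_coe_iff.mp (Set.finite_univ_iff.mp (hfin.subset fun u _ => (hcμ u).1))
  · exact ball_subset_ball' (by linarith [mem_ball.mp u.2.2])

theorem BoundedGeometry.countable_of_isDiscreteWith (hμ : BoundedGeometry μ) {r : ℝ}
    (hr : 0 < r) {D : Set X} (hD : IsDiscreteWith r D) : D.Countable := by
  obtain rfl | ⟨x, -⟩ := D.eq_empty_or_nonempty
  · exact countable_empty
  refine (countable_iUnion fun n : ℕ =>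
    (hμ.finite_inter_ball hr hD x n.cast_nonneg).countable).mono fun u hu => ?_
  obtain ⟨n, hn⟩ := exists_nat_gt (dist u x)
  exact mem_iUnion.mpr ⟨n, hu, mem_ball.mpr hn⟩

end Delone

theorem gram_operator_bounded_positive_invertible_general {X : Type*} [MetricSpace X]
    [MeasurableSpace X] [BorelSpace X] (μ : Measure X) (hbg : BoundedGeometry μ)
    (D : Set X) (r R : ℝ) (hr : 0 < r) (hR : 0 < R)
    (hdisc : IsDiscreteWith r D)
    (φ : X → X → ℝ) (hmeas : ∀ u ∈ D, Measurable (φ u))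
    (hrange : ∀ u ∈ D, ∀ x : X, φ u x ∈ Icc (0 : ℝ) 1)
    (hsupp : ∀ u ∈ D, ∀ x : X, 2 * R ≤ dist x u → φ u x = 0)
    (hone : ∀ u ∈ D, ∀ x : X, dist x u < r / 6 → φ u x = 1)
    (hsum : ∀ x : X, HasSum (fun u : D => φ u.1 x) 1) :
    ∃ G : lp (fun _ : D => ℂ) 2 →L[ℂ] lp (fun _ : D => ℂ) 2,
      (∀ u v : D, (inner ℂ (lp.single 2 u (1 : ℂ)) (G (lp.single 2 v (1 : ℂ))) : ℂ) =
        ((∫ x, φ u.1 x * φ v.1 x ∂μ : ℝ) : ℂ)) ∧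
      G.IsPositive ∧ IsUnit G := by
  have : Countable D := (hbg.countable_of_isDiscreteWith hr hdisc).to_subtype
  have hφ : IsMeasurablePartitionOfUnity fun u : D => φ u :=
    ⟨fun u => hmeas u u.2, fun u x => (hrange u u.2 x).1, hsum⟩
  obtain ⟨_, C, _, hC_top, hC⟩ := hbg (2 * R) (by positivity)
  obtain ⟨c, _, hc, _, hcμ⟩ := hbg (r / 6) (by positivity)
  have hφC (u : D) : ∫⁻ x, ‖φ u x‖ₑ ∂μ ≤ C :=
    (lintegral_enorm_le_measure (fun x => (abs_of_nonneg (hrange u u.2 x).1).trans_le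
      (hrange u u.2 x).2) measurableSet_ball fun x hx => hsupp u u.2 x (not_lt.mp hx)).trans
      (hC u).2
  let T := hφ.synthesisL2 (𝕜 := ℂ) hφC hC_top.ne
  refine ⟨T† ∘L T, fun u v => ?_, T.isPositive_adjoint_comp_self,
    T.isUnit_adjoint_comp_self_of_mul_enorm_sq_le hc fun ξ => ?_⟩
  · rw [ContinuousLinearMap.comp_apply, T.adjoint_inner_right]
    exact hφ.inner_synthesisL2_single (𝕜 := ℂ) hφC hC_top.ne u v
  · exact hφ.le_enorm_synthesisL2_sq hφC hC_top.ne (fun _ => measurableSet_ball)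
      (fun u v huv => hdisc.pairwiseDisjoint_ball (by linarith) u.2 v.2
        (Subtype.coe_injective.ne huv))
      (fun u x hx => hone u u.2 x hx) (fun u => (hcμ u).1) ξ

/-- The Gram matrix `g_{uv} = ∫ φ_u φ_v dμ` of a partition of unity subordinate to an
`(r,R)`-Delone set defines a bounded, positive, invertible operator on `ℓ²(D)`. -/
theorem gram_operator_bounded_positive_invertible {X : Type*} [MetricSpace X]
    [MeasurableSpace X] [BorelSpace X] (μ : Measure X) (hbg : BoundedGeometry μ)
    (D : Set X) (r R : ℝ) (hr : 0 < r) (hR : 0 < R)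
    (hdisc : IsDiscreteWith r D) (hdense : IsDenseWith R D)
    (φ : X → X → ℝ) (hmeas : ∀ u ∈ D, Measurable (φ u))
    (hrange : ∀ u ∈ D, ∀ x : X, φ u x ∈ Icc (0 : ℝ) 1)
    (hsupp : ∀ u ∈ D, ∀ x : X, 2 * R ≤ dist x u → φ u x = 0)
    (hone : ∀ u ∈ D, ∀ x : X, dist x u < r / 6 → φ u x = 1)
    (hsum : ∀ x : X, HasSum (fun u : D => φ u.1 x) 1) :
    ∃ G : lp (fun _ : D => ℂ) 2 →L[ℂ] lp (fun _ : D => ℂ) 2,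
      (∀ u v : D, (inner ℂ (lp.single 2 u (1 : ℂ)) (G (lp.single 2 v (1 : ℂ))) : ℂ) =
        ((∫ x, φ u.1 x * φ v.1 x ∂μ : ℝ) : ℂ)) ∧
      G.IsPositive ∧ IsUnit G :=
  gram_operator_bounded_positive_invertible_general μ hbg D r R hr hR hdisc φ hmeas hrange hsupp
    hone hsum
end

section
/- Let (X,d,μ) be a proper metric measure space of bounded geometry. For each n ∈ ℕ let D_n ⊆ X be an (r_n, R_n)-Delone set with lim_{n→∞} R_n = 0, and let {φ^n_u}_{u∈D_n} be a family of Borel measurable functions φ^n_u : X → [0,1] such that φ^n_u(x) = 0 whenever d(x,u) ≥ 2R_n and Σ_{u∈D_n} φ^n_u(x) = 1 for all x ∈ X. Let P_n denote the orthogonal projection of L²(X,μ) onto the closure of the linear span of {φ^n_u : u ∈ D_n}. Then P_n converges strongly to the identity operator: for every f ∈ L²(X,μ), ‖P_n f - f‖_{L²} → 0 as n → ∞. -/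
/-!
Each `P n f` is a best approximation of `f` from `K n`, so it suffices to approximate `f` from
`K n` for large `n`. First approximate `f` in `L²` by a continuous compactly supported `g`, then
`g` by its quasi-interpolant `∑ u, g u • φ n u`. As the `φ n u` form a partition of unity
subordinate to the balls of radius `2 R n` around `D n`, the difference is pointwise bounded by
the oscillation of `g` at scale `2 R n` and vanishes off a fixed compact neighbourhood of the
support of `g`, so uniform continuity makes it small in `L²`. Discreteness of `D n` makes the
quasi-interpolant a finite sum, hence an element of the span.
-/

open Metric Set MeasureTheory Filter ENNReal

theorem IsDiscreteWith.finite_inter_of_isCompact {X : Type*} [MetricSpace X] {s : ℝ} {D S : Set X}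
    (hD : IsDiscreteWith s D) (hs : 0 < s) (hS : IsCompact S) : (D ∩ S).Finite := by
  obtain ⟨t, -, ht, hcover⟩ :=
    finite_approx_of_totallyBounded hS.totallyBounded (s / 2) (half_pos hs)
  refine (ht.biUnion fun y _ => Subsingleton.finite (s := D ∩ ball y (s / 2)) ?_).subset ?_
  · rintro a ⟨haD, ha⟩ b ⟨hbD, hb⟩
    by_contra hab
    have := dist_triangle_right a b y
    linarith [hD a haD b hbD hab, mem_ball.1 ha, mem_ball.1 hb]
  · rintro x ⟨hxD, hxS⟩
    obtain ⟨y, hy, hxy⟩ := mem_iUnion₂.1 (hcover hxS)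
    exact mem_iUnion₂.2 ⟨y, hy, hxD, hxy⟩

theorem BoundedGeometry.isFiniteMeasureOnCompacts {X : Type*} [MetricSpace X] [MeasurableSpace X]
    {μ : Measure X} (hμ : BoundedGeometry μ) : IsFiniteMeasureOnCompacts μ := by
  obtain ⟨_, C, _, hC, hball⟩ := hμ 1 one_pos
  have : IsLocallyFiniteMeasure μ :=
    ⟨fun x => ⟨ball x 1, ball_mem_nhds x one_pos, (hball x).2.trans_lt hC⟩⟩
  infer_instance

theorem Submodule.norm_sub_le_of_sub_mem_orthogonal {𝕜 E : Type*} [RCLike 𝕜]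
    [NormedAddCommGroup E] [InnerProductSpace 𝕜 E] {K : Submodule 𝕜 E} {u v w : E}
    (hv : v ∈ K) (hvo : u - v ∈ Kᗮ) (hw : w ∈ K) : ‖u - v‖ ≤ ‖u - w‖ := by
  rw [(K.norm_eq_iInf_iff_inner_eq_zero hv).2 ((K.mem_orthogonal' _).1 hvo)]
  exact ciInf_le ⟨0, by rintro _ ⟨_, rfl⟩; positivity⟩ (⟨w, hw⟩ : K)

theorem tendsto_norm_sub_of_forall_eventually_exists_near {ι 𝕜 E : Type*} [RCLike 𝕜]
    [NormedAddCommGroup E] [InnerProductSpace 𝕜 E] {l : Filter ι} {K : ι → Submodule 𝕜 E}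
    {f : E} {p : ι → E} (hp : ∀ i, p i ∈ K i) (hpo : ∀ i, f - p i ∈ (K i)ᗮ)
    (hnear : ∀ ε > 0, ∀ᶠ i in l, ∃ h ∈ K i, ‖f - h‖ ≤ ε) :
    Tendsto (fun i => ‖p i - f‖) l (nhds 0) := by
  rw [Metric.tendsto_nhds]
  intro ε hε
  filter_upwards [hnear (ε / 2) (half_pos hε)] with i ⟨h, hhK, hh⟩
  rw [Real.dist_0_eq_abs, abs_norm, norm_sub_rev]
  exact ((K i).norm_sub_le_of_sub_mem_orthogonal (hp i) (hpo i) hhK).trans_lt (by linarith)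

theorem norm_sub_le_of_hasSum_smul {ι E : Type*} [NormedAddCommGroup E] [NormedSpace ℝ E]
    {w : ι → ℝ} {v : ι → E} {a b : E} {ε : ℝ} (hw0 : ∀ i, 0 ≤ w i) (hw : HasSum w 1)
    (hb : HasSum (fun i => w i • v i) b) (hv : ∀ i, w i ≠ 0 → ‖a - v i‖ ≤ ε) :
    ‖a - b‖ ≤ ε := by
  have hdiff : HasSum (fun i => w i • (a - v i)) (a - b) := by
    simpa only [smul_sub, one_smul] using (hw.smul_const a).sub hb
  have hle : ∀ i, ‖w i • (a - v i)‖ ≤ w i * ε := fun i => by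
    rcases eq_or_ne (w i) 0 with h | h
    · simp [h]
    · rw [norm_smul, Real.norm_of_nonneg (hw0 i)]
      exact mul_le_mul_of_nonneg_left (hv i h) (hw0 i)
  simpa only [one_mul] using hdiff.norm_le_of_bounded (hw.mul_right ε) hle

theorem eLpNorm_le_of_norm_le_of_eqOn_compl {α E : Type*} [MeasurableSpace α]
    [NormedAddCommGroup E] {μ : Measure α} {p : ℝ≥0∞} {F : α → E} {S : Set α} {c : ℝ}
    (hF : ∀ x, ‖F x‖ ≤ c) (hF0 : EqOn F 0 Sᶜ) :
    eLpNorm F p μ ≤ ‖c‖ₑ * μ S ^ (1 / p.toReal) := by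
  refine (eLpNorm_mono fun x => ?_).trans (eLpNorm_indicator_const_le c p)
  by_cases hx : x ∈ S
  · simpa [indicator_of_mem hx] using (hF x).trans (le_abs_self c)
  · simp [hF0 hx, indicator_of_notMem hx]

theorem memLp_of_norm_le_of_eqOn_compl {α E : Type*} [MeasurableSpace α]
    [NormedAddCommGroup E] {μ : Measure α} {p : ℝ≥0∞} {F : α → E} {S : Set α} {c : ℝ}
    (hFm : AEStronglyMeasurable F μ) (hF : ∀ x, ‖F x‖ ≤ c) (hF0 : EqOn F 0 Sᶜ) (hS : μ S ≠ ∞) :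
    MemLp F p μ :=
  ⟨hFm, (eLpNorm_le_of_norm_le_of_eqOn_compl hF hF0).trans_lt
    (mul_lt_top enorm_lt_top (rpow_lt_top_of_nonneg (by positivity) hS))⟩

namespace MeasureTheory.Lp

variable {α E : Type*} [MeasurableSpace α] [NormedAddCommGroup E] {μ : Measure α} {p : ℝ≥0∞}

theorem coeFn_finset_sum {ι : Type*} (s : Finset ι) (f : ι → Lp E p μ) :
    ⇑(∑ i ∈ s, f i) =ᵐ[μ] ∑ i ∈ s, ⇑(f i) := by
  classical
  induction s using Finset.induction_on with
  | empty => simpa using Lp.coeFn_zero E p μ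
  | insert i s hi ih =>
    rw [Finset.sum_insert hi, Finset.sum_insert hi]
    exact (Lp.coeFn_add _ _).trans (EventuallyEq.rfl.add ih)

theorem norm_le_of_ae_eq_of_eqOn_compl {f : Lp E p μ} {F : α → E} (hfF : f =ᵐ[μ] F)
    {S : Set α} {c : ℝ} (hc : 0 ≤ c) (hF : ∀ x, ‖F x‖ ≤ c) (hF0 : EqOn F 0 Sᶜ) (hS : μ S ≠ ∞) :
    ‖f‖ ≤ c * (μ S).toReal ^ (1 / p.toReal) := by
  rw [Lp.norm_def, eLpNorm_congr_ae hfF]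
  refine (toReal_mono (mul_ne_top enorm_ne_top (rpow_ne_top_of_nonneg (by positivity) hS))
    (eLpNorm_le_of_norm_le_of_eqOn_compl hF hF0)).trans_eq ?_
  rw [toReal_mul, toReal_rpow, toReal_enorm, Real.norm_of_nonneg hc]

end MeasureTheory.Lp

structure IsBallPartitionOfUnity {X : Type*} [MetricSpace X] [MeasurableSpace X] (D : Set X)
    (ρ : ℝ) (φ : X → X → ℝ) : Prop where
  measurable : ∀ u ∈ D, Measurable (φ u)
  mem_Icc : ∀ u ∈ D, ∀ x, φ u x ∈ Icc (0 : ℝ) 1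
  eq_zero_of_le_dist : ∀ u ∈ D, ∀ x, ρ ≤ dist x u → φ u x = 0
  hasSum : ∀ x, HasSum (fun u : D => φ u x) 1

noncomputable def partitionSpan {X : Type*} [MeasurableSpace X] (μ : Measure X) (p : ℝ≥0∞)
    [Fact (1 ≤ p)] (D : Set X) (φ : X → X → ℝ) : Submodule ℂ (Lp ℂ p μ) :=
  Submodule.span ℂ {f : Lp ℂ p μ | ∃ u ∈ D, f =ᵐ[μ] fun x => (φ u x : ℂ)}

namespace IsBallPartitionOfUnity

variable {X : Type*} [MetricSpace X] [MeasurableSpace X] {D : Set X} {ρ : ℝ} {φ : X → X → ℝ}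

theorem dist_lt_of_ne_zero (hφ : IsBallPartitionOfUnity D ρ φ) {u : X} (hu : u ∈ D) {x : X}
    (hx : φ u x ≠ 0) : dist x u < ρ :=
  lt_of_not_ge fun h => hx (hφ.eq_zero_of_le_dist u hu x h)

theorem norm_sub_sum_smul_le {E : Type*} [NormedAddCommGroup E] [NormedSpace ℝ E]
    (hφ : IsBallPartitionOfUnity D ρ φ) {g : X → E} {F : Finset D} (hF : ∀ u ∉ F, g u = 0)
    {ε : ℝ} (hg : ∀ x y, dist x y < ρ → ‖g x - g y‖ ≤ ε) (x : X) :
    ‖g x - ∑ u ∈ F, φ u x • g u‖ ≤ ε :=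
  norm_sub_le_of_hasSum_smul (w := fun u : D => φ u x) (fun u => (hφ.mem_Icc u u.2 x).1)
    (hφ.hasSum x)
    (hasSum_sum_of_ne_finset_zero fun u hu => by simp [hF u hu])
    fun u hu => hg x u (hφ.dist_lt_of_ne_zero u.2 hu)

theorem sum_smul_eq_zero_of_notMem_cthickening {E : Type*} [AddCommMonoid E] [Module ℝ E]
    (hφ : IsBallPartitionOfUnity D ρ φ) {T : Set X} {F : Finset D} (hF : ∀ u ∈ F, ↑u ∈ T)
    {x : X} (hx : x ∉ cthickening ρ T) (g : X → E) : ∑ u ∈ F, φ u x • g u = 0 := by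
  refine Finset.sum_eq_zero fun u hu => ?_
  by_cases h : φ u x = 0
  · simp [h]
  · exact absurd (mem_cthickening_of_dist_le x u ρ T (hF u hu)
      (hφ.dist_lt_of_ne_zero u.2 h).le) hx

variable [ProperSpace X] {μ : Measure X} [IsFiniteMeasureOnCompacts μ] {p : ℝ≥0∞}

theorem memLp (hφ : IsBallPartitionOfUnity D ρ φ) {u : X} (hu : u ∈ D) :
    MemLp (fun x => (φ u x : ℂ)) p μ := by
  refine memLp_of_norm_le_of_eqOn_compl (S := closedBall u ρ) (c := 1)
    (Complex.measurable_ofReal.comp (hφ.measurable u hu)).aestronglyMeasurable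
    (fun x => ?_) (fun x hx => ?_) measure_closedBall_lt_top.ne
  · rw [Complex.norm_real, Real.norm_of_nonneg (hφ.mem_Icc u hu x).1]
    exact (hφ.mem_Icc u hu x).2
  · rw [mem_compl_iff, mem_closedBall, not_le] at hx
    simp [hφ.eq_zero_of_le_dist u hu x hx.le]

theorem exists_mem_partitionSpan_norm_toLp_sub_le [Fact (1 ≤ p)]
    (hφ : IsBallPartitionOfUnity D ρ φ) {s : ℝ} (hD : IsDiscreteWith s D) (hs : 0 < s)
    {g : X → ℂ} (hgc : HasCompactSupport g) (hgp : MemLp g p μ) {ε : ℝ} (hε : 0 ≤ ε)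
    (hg : ∀ x y, dist x y < ρ → ‖g x - g y‖ ≤ ε) :
    ∃ h ∈ partitionSpan μ p D φ,
      ‖hgp.toLp g - h‖ ≤ ε * (μ (cthickening ρ (tsupport g))).toReal ^ (1 / p.toReal) := by
  have hfin := (hD.finite_inter_of_isCompact hs hgc).preimage
    (Subtype.val_injective (p := (· ∈ D))).injOn
  set F := hfin.toFinset
  have hF : ∀ u : D, u ∈ F ↔ ↑u ∈ tsupport g := fun u => by simp [F]
  let Φ : D → Lp ℂ p μ := fun u => (hφ.memLp u.2).toLp _
  refine ⟨∑ u ∈ F, g u • Φ u, Submodule.sum_mem _ fun u _ => Submodule.smul_mem _ _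
    (Submodule.subset_span ⟨u, u.2, MemLp.coeFn_toLp _⟩), ?_⟩
  refine Lp.norm_le_of_ae_eq_of_eqOn_compl (F := fun x => g x - ∑ u ∈ F, φ u x • g u) ?_ hε
    (hφ.norm_sub_sum_smul_le (fun u hu => image_eq_zero_of_notMem_tsupport ((hF u).not.1 hu)) hg)
    (fun x hx => ?_) hgc.cthickening.measure_lt_top.ne
  · have hsum : ⇑(∑ u ∈ F, g u • Φ u) =ᵐ[μ] ∑ u ∈ F, fun x => φ u x • g u :=
      (Lp.coeFn_finset_sum _ _).trans <| eventuallyEq_sum fun u _ => by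
        filter_upwards [Lp.coeFn_smul (g u) (Φ u), MemLp.coeFn_toLp (hφ.memLp u.2)] with x h1 h2
        rw [h1, Pi.smul_apply, h2, smul_eq_mul, Complex.real_smul, mul_comm]
    filter_upwards [Lp.coeFn_sub (hgp.toLp g) (∑ u ∈ F, g u • Φ u), hgp.coeFn_toLp, hsum]
      with x h1 h2 h3
    rw [h1, Pi.sub_apply, h2, h3, Finset.sum_apply]
  · have hxT : x ∉ tsupport g := fun h => hx (self_subset_cthickening _ h)
    change g x - _ = 0
    rw [image_eq_zero_of_notMem_tsupport hxT,
      hφ.sum_smul_eq_zero_of_notMem_cthickening (fun u hu => (hF u).1 hu) hx, sub_zero]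

end IsBallPartitionOfUnity

theorem HasCompactSupport.eventually_exists_mem_partitionSpan_norm_toLp_sub_le {X : Type*}
    [MetricSpace X] [ProperSpace X] [MeasurableSpace X] {μ : Measure X}
    [IsFiniteMeasureOnCompacts μ] {p : ℝ≥0∞} [Fact (1 ≤ p)] {g : X → ℂ}
    (hgc : HasCompactSupport g) (hg : Continuous g) (hgp : MemLp g p μ) {ε : ℝ} (hε : 0 < ε) :
    ∀ᶠ ρ in nhds 0, ∀ (D : Set X) (s : ℝ) (φ : X → X → ℝ), IsDiscreteWith s D → 0 < s →
      IsBallPartitionOfUnity D ρ φ → ∃ h ∈ partitionSpan μ p D φ, ‖hgp.toLp g - h‖ ≤ ε := by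
  set M := (μ (cthickening 1 (tsupport g))).toReal ^ (1 / p.toReal)
  have hM : 0 ≤ M := by positivity
  -- `M + 1` rather than `M`, since `M` may vanish.
  have hε₀ : 0 < ε / (M + 1) := by positivity
  obtain ⟨δ, hδ, hgδ⟩ :=
    Metric.uniformContinuous_iff.1 (hgc.uniformContinuous_of_continuous hg) _ hε₀
  filter_upwards [Iio_mem_nhds (lt_min hδ one_pos)] with ρ hρ D s φ hD hs hφ
  obtain ⟨hρδ, hρ1⟩ := lt_min_iff.1 (mem_Iio.1 hρ)
  obtain ⟨h, hh, hgh⟩ := hφ.exists_mem_partitionSpan_norm_toLp_sub_le hD hs hgc hgp hε₀.le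
    fun x y hxy => by simpa [dist_eq_norm] using (hgδ (hxy.trans hρδ)).le
  refine ⟨h, hh, hgh.trans ?_⟩
  calc ε / (M + 1) * (μ (cthickening ρ (tsupport g))).toReal ^ (1 / p.toReal)
      ≤ ε / (M + 1) * M := by
        gcongr ε / (M + 1) * ?_
        refine Real.rpow_le_rpow toReal_nonneg (toReal_mono ?_ (measure_mono ?_)) (by positivity)
        · exact hgc.cthickening.measure_lt_top.ne
        · exact cthickening_mono hρ1.le _
    _ ≤ ε := by
        rw [div_mul_eq_mul_div, div_le_iff₀ (by positivity)]
        nlinarith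

theorem projections_tendsto_id_general {X : Type*} [MetricSpace X] [ProperSpace X]
    [MeasurableSpace X] [BorelSpace X] (μ : Measure X) (hbg : BoundedGeometry μ)
    (D : ℕ → Set X) (r R : ℕ → ℝ) (hr : ∀ n, 0 < r n)
    (hdisc : ∀ n, IsDiscreteWith (r n) (D n))
    (hR0 : Tendsto R atTop (nhds 0))
    (φ : ℕ → X → X → ℝ)
    (hmeas : ∀ n, ∀ u ∈ D n, Measurable (φ n u))
    (hrange : ∀ n, ∀ u ∈ D n, ∀ x : X, φ n u x ∈ Icc (0 : ℝ) 1)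
    (hsupp : ∀ n, ∀ u ∈ D n, ∀ x : X, 2 * R n ≤ dist x u → φ n u x = 0)
    (hsum : ∀ n, ∀ x : X, HasSum (fun u : D n => φ n u.1 x) 1)
    (K : ℕ → Submodule ℂ (Lp ℂ 2 μ))
    (hK : ∀ n, K n = (Submodule.span ℂ
      {g : Lp ℂ 2 μ | ∃ u ∈ D n, (g : X → ℂ) =ᵐ[μ] fun x => (φ n u x : ℂ)}).topologicalClosure)
    (P : ℕ → Lp ℂ 2 μ →L[ℂ] Lp ℂ 2 μ)
    (hP : ∀ n, ∀ f : Lp ℂ 2 μ, P n f ∈ K n ∧ f - P n f ∈ (K n)ᗮ) :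
    ∀ f : Lp ℂ 2 μ, Tendsto (fun n => ‖P n f - f‖) atTop (nhds 0) := by
  have := hbg.isFiniteMeasureOnCompacts
  intro f
  refine tendsto_norm_sub_of_forall_eventually_exists_near (fun n => (hP n f).1)
    (fun n => (hP n f).2) fun ε hε => ?_
  obtain ⟨g, hgc, hfg, hg, hgp⟩ := (Lp.memLp f).exists_hasCompactSupport_eLpNorm_sub_le
    ENNReal.ofNat_ne_top (ofReal_pos.2 (half_pos hε)).ne'
  have hfg' : ‖f - hgp.toLp g‖ ≤ ε / 2 := by
    rw [← dist_eq_norm, Lp.dist_def, eLpNorm_congr_ae (EventuallyEq.rfl.sub hgp.coeFn_toLp)]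
    exact toReal_le_of_le_ofReal (half_pos hε).le hfg
  have h2R : Tendsto (fun n => 2 * R n) atTop (nhds 0) := by simpa using hR0.const_mul 2
  filter_upwards [h2R.eventually
    (hgc.eventually_exists_mem_partitionSpan_norm_toLp_sub_le hg hgp (half_pos hε))] with n hn
  obtain ⟨h, hh, hgh⟩ :=
    hn (D n) (r n) (φ n) (hdisc n) (hr n) ⟨hmeas n, hrange n, hsupp n, hsum n⟩
  refine ⟨h, hK n ▸ Submodule.le_topologicalClosure _ hh, ?_⟩
  linarith [norm_sub_le_norm_sub_add_norm_sub f (hgp.toLp g) h]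

/-- The orthogonal projections onto the spans of the partitions of unity subordinate to
Delone sets `D_n` with `R(D_n) → 0` converge strongly to the identity on `L²(X,μ)`. -/
theorem projections_tendsto_id {X : Type*} [MetricSpace X] [ProperSpace X]
    [MeasurableSpace X] [BorelSpace X] (μ : Measure X) (hbg : BoundedGeometry μ)
    (D : ℕ → Set X) (r R : ℕ → ℝ) (hr : ∀ n, 0 < r n)
    (hdisc : ∀ n, IsDiscreteWith (r n) (D n))
    (hdense : ∀ n, IsDenseWith (R n) (D n))
    (hR0 : Tendsto R atTop (nhds 0))
    (φ : ℕ → X → X → ℝ)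
    (hmeas : ∀ n, ∀ u ∈ D n, Measurable (φ n u))
    (hrange : ∀ n, ∀ u ∈ D n, ∀ x : X, φ n u x ∈ Icc (0 : ℝ) 1)
    (hsupp : ∀ n, ∀ u ∈ D n, ∀ x : X, 2 * R n ≤ dist x u → φ n u x = 0)
    (hsum : ∀ n, ∀ x : X, HasSum (fun u : D n => φ n u.1 x) 1)
    (K : ℕ → Submodule ℂ (Lp ℂ 2 μ))
    (hK : ∀ n, K n = (Submodule.span ℂ
      {g : Lp ℂ 2 μ | ∃ u ∈ D n, (g : X → ℂ) =ᵐ[μ] fun x => (φ n u x : ℂ)}).topologicalClosure)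
    (P : ℕ → Lp ℂ 2 μ →L[ℂ] Lp ℂ 2 μ)
    (hP : ∀ n, ∀ f : Lp ℂ 2 μ, P n f ∈ K n ∧ f - P n f ∈ (K n)ᗮ) :
    ∀ f : Lp ℂ 2 μ, Tendsto (fun n => ‖P n f - f‖) atTop (nhds 0) :=
  projections_tendsto_id_general μ hbg D r R hr hdisc hR0 φ hmeas hrange hsupp hsum K hK P hP
end
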